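/- arXiv:1903.11925 — 3 statements merged into one kernel-verified Lean document; each statement's English description precedes it below -/
import Mathlib

section
/- The non-Fano matroid F_7^- is realizable over a field K if and only if the characteristic of K is not 2. -/
/-- The lines (nontrivial rank-2 flats) of the Fano matroid `F₇` on `{0,…,6}`. -/
def nonFanoLines : Set (Set (Fin 7)) :=
  {{0,1,5}, {0,2,4}, {0,3,6}, {1,2,3}, {1,4,6}, {2,5,6}}

/-- `M` is the non-Fano matroid: the rank-3 simple matroid on `{0,…,6}` whose dependent
3-sets are exactly the Fano lines. -/
def IsNonFanoMatroid (M : Matroid (Fin 7)) : Prop :=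
  M.E = Set.univ ∧ ∀ I : Set (Fin 7), M.Indep I ↔ I.encard ≤ 3 ∧ I ∉ nonFanoLines

/-- A rank-3 matroid on `Fin 7` is realizable over `K` if it is the column matroid of a
`3 × 7` matrix over `K`, i.e. there is a map `E → K³` whose linear dependencies are
exactly the dependencies of the matroid. -/
def RealizableRank3 (K : Type) [Field K] (M : Matroid (Fin 7)) : Prop :=
  ∃ φ : Fin 7 → (Fin 3 → K),
    ∀ I : Set (Fin 7), M.Indep I ↔ LinearIndependent K (fun i : I => φ i)

section Aux

variable {K : Type} [Field K]

/-- Determinant of the 3×3 matrix with rows `u`, `v`, `w`. -/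
noncomputable def nfDet3 (u v w : Fin 3 → K) : K := (Matrix.of ![u, v, w]).det

private lemma nfDet3_expand (u v w : Fin 3 → K) :
    nfDet3 u v w = u 0 * (v 1 * w 2 - v 2 * w 1) - u 1 * (v 0 * w 2 - v 2 * w 0)
      + u 2 * (v 0 * w 1 - v 1 * w 0) := by
  simp only [nfDet3, Matrix.det_fin_three, Matrix.of_apply, Matrix.cons_val',
    Matrix.cons_val_zero, Matrix.cons_val_one, Matrix.head_cons, Matrix.empty_val',
    Matrix.cons_val_fin_one, Matrix.cons_val_two, Matrix.tail_cons, Matrix.head_fin_const]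
  ring

private lemma nfDet3_lit (a b c d e f g h i : K) :
    nfDet3 ![a,b,c] ![d,e,f] ![g,h,i] =
      a * (e * i - f * h) - b * (d * i - f * g) + c * (d * h - e * g) := by
  simp [nfDet3_expand]

lemma nf_li_iff_det3 (u v w : Fin 3 → K) :
    LinearIndependent K ![u, v, w] ↔ nfDet3 u v w ≠ 0 := by
  have h : LinearIndependent K (fun i => Matrix.of ![u, v, w] i) ↔
      IsUnit (Matrix.of ![u, v, w]) := Matrix.linearIndependent_rows_iff_isUnit
  rw [Matrix.isUnit_iff_isUnit_det, isUnit_iff_ne_zero] at h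
  exact h

lemma nf_li_mono {φ : Fin 7 → Fin 3 → K} {s t : Set (Fin 7)} (hst : s ⊆ t)
    (h : LinearIndependent K (fun i : t => φ i)) :
    LinearIndependent K (fun i : s => φ i) :=
  h.comp (Set.inclusion hst) (Set.inclusion_injective hst)

lemma nf_li_triple (φ : Fin 7 → Fin 3 → K) {a b c : Fin 7} (hab : a ≠ b) (hac : a ≠ c)
    (hbc : b ≠ c) :
    LinearIndependent K (fun i : ({a,b,c} : Set (Fin 7)) => φ i) ↔
      LinearIndependent K ![φ a, φ b, φ c] := by
  let e : Fin 3 ≃ ({a,b,c} : Set (Fin 7)) :=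
    { toFun := ![⟨a, by simp⟩, ⟨b, by simp⟩, ⟨c, by simp⟩]
      invFun := fun x => if x = a then 0 else if x = b then 1 else 2
      left_inv := by
        intro i
        fin_cases i <;>
          simp [hab, hab.symm, hac, hac.symm, hbc, hbc.symm]
      right_inv := by
        rintro ⟨x, hx⟩
        simp only [Set.mem_insert_iff, Set.mem_singleton_iff] at hx
        rcases hx with rfl | rfl | rfl
        · simp
        · simp [hab.symm]
        · simp [hac.symm, hbc.symm] }
  refine (linearIndependent_equiv' e ?_).symm
  funext i
  fin_cases i <;> simp [e]

lemma nf_two_ne_zero (h : ringChar K ≠ 2) : (2 : K) ≠ 0 := by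
  intro h2
  have hd : ringChar K ∣ 2 := ringChar.dvd (by exact_mod_cast h2)
  rcases (Nat.dvd_prime Nat.prime_two).mp hd with h1 | h1
  · have : ((1:ℕ) : K) = 0 := (ringChar.spec K 1).mpr (h1 ▸ dvd_refl _)
    simp at this
  · exact h h1

lemma nf_two_eq_zero (h : ringChar K = 2) : (2 : K) = 0 := by
  have := (ringChar.spec K 2).mpr (h ▸ dvd_refl _)
  exact_mod_cast this

private lemma nf_scalar_contra {D a b c d e f x y z m : K}
    (key : D ^ 2 * m = a * d * e + b * c * f)
    (e1 : a * z = b * y) (e2 : d * x = c * z) (e3 : e * y = f * x)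
    (hD : D ≠ 0) (hm : m ≠ 0)
    (hx : x ≠ 0) (hy : y ≠ 0) (hz : z ≠ 0) (h2 : (2 : K) = 0) : False := by
  have prod : (a * d * e - b * c * f) * (x * y * z) = 0 := by
    linear_combination (d * x * e * y) * e1 + (b * y * e * y) * e2 + (b * y * c * z) * e3
  have habc : a * d * e = b * c * f := by
    rcases mul_eq_zero.mp prod with h | h
    · exact sub_eq_zero.mp h
    · exact absurd h (mul_ne_zero (mul_ne_zero hx hy) hz)
  have hz' : D ^ 2 * m = 0 := by linear_combination key + habc + (b * c * f) * h2
  exact (mul_ne_zero (pow_ne_zero 2 hD) hm) hz'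

set_option maxHeartbeats 2000000 in
lemma nf_char_two_contradiction (v0 v1 v2 v3 v4 v5 v6 : Fin 3 → K)
    (h123 : nfDet3 v3 v1 v2 = 0) (h024 : nfDet3 v0 v4 v2 = 0) (h015 : nfDet3 v0 v1 v5 = 0)
    (h036 : nfDet3 v0 v3 v6 = 0) (h146 : nfDet3 v1 v4 v6 = 0) (h256 : nfDet3 v2 v5 v6 = 0)
    (hD : nfDet3 v0 v1 v2 ≠ 0)
    (hx0 : nfDet3 v6 v1 v2 ≠ 0) (hx1 : nfDet3 v0 v6 v2 ≠ 0) (hx2 : nfDet3 v0 v1 v6 ≠ 0)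
    (h345 : nfDet3 v3 v4 v5 ≠ 0) (h2 : (2 : K) = 0) : False := by
  have A1 : nfDet3 v0 v1 v2 * nfDet3 v0 v3 v6 =
      nfDet3 v0 v3 v2 * nfDet3 v0 v1 v6 - nfDet3 v0 v1 v3 * nfDet3 v0 v6 v2 := by
    simp only [nfDet3_expand]; ring
  have A2 : nfDet3 v0 v1 v2 * nfDet3 v1 v4 v6 =
      nfDet3 v0 v1 v4 * nfDet3 v6 v1 v2 - nfDet3 v4 v1 v2 * nfDet3 v0 v1 v6 := by
    simp only [nfDet3_expand]; ring
  have A3 : nfDet3 v0 v1 v2 * nfDet3 v2 v5 v6 =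
      nfDet3 v5 v1 v2 * nfDet3 v0 v6 v2 - nfDet3 v0 v5 v2 * nfDet3 v6 v1 v2 := by
    simp only [nfDet3_expand]; ring
  have A4 : nfDet3 v0 v1 v2 ^ 2 * nfDet3 v3 v4 v5 =
      nfDet3 v3 v1 v2 * (nfDet3 v0 v4 v2 * nfDet3 v0 v1 v5 - nfDet3 v0 v1 v4 * nfDet3 v0 v5 v2)
        - nfDet3 v0 v3 v2 * (nfDet3 v4 v1 v2 * nfDet3 v0 v1 v5
            - nfDet3 v0 v1 v4 * nfDet3 v5 v1 v2)
        + nfDet3 v0 v1 v3 * (nfDet3 v4 v1 v2 * nfDet3 v0 v5 v2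
            - nfDet3 v0 v4 v2 * nfDet3 v5 v1 v2) := by
    simp only [nfDet3_expand]; ring
  rw [h036, mul_zero] at A1
  rw [h146, mul_zero] at A2
  rw [h256, mul_zero] at A3
  rw [h123, h024, h015] at A4
  refine nf_scalar_contra (a := nfDet3 v0 v3 v2) (b := nfDet3 v0 v1 v3) (c := nfDet3 v4 v1 v2)
    (d := nfDet3 v0 v1 v4) (e := nfDet3 v5 v1 v2) (f := nfDet3 v0 v5 v2)
    (m := nfDet3 v3 v4 v5) ?_ ?_ ?_ ?_ hD h345 hx0 hx1 hx2 h2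
  · linear_combination A4
  · linear_combination -A1
  · linear_combination -A2
  · linear_combination -A3

/-- The standard realization of the non-Fano matroid. -/
def nfStdVecs : Fin 7 → Fin 3 → K :=
  ![![0,0,1], ![1,0,0], ![0,1,0], ![1,1,0], ![0,1,1], ![1,0,1], ![1,1,1]]

private lemma nfstd0 : nfStdVecs (K := K) 0 = ![0,0,1] := rfl
private lemma nfstd1 : nfStdVecs (K := K) 1 = ![1,0,0] := rfl
private lemma nfstd2 : nfStdVecs (K := K) 2 = ![0,1,0] := rfl
private lemma nfstd3 : nfStdVecs (K := K) 3 = ![1,1,0] := rfl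
private lemma nfstd4 : nfStdVecs (K := K) 4 = ![0,1,1] := rfl
private lemma nfstd5 : nfStdVecs (K := K) 5 = ![1,0,1] := rfl
private lemma nfstd6 : nfStdVecs (K := K) 6 = ![1,1,1] := rfl

/-- The non-Fano lines, as finsets. -/
def nfLineFinsets : Finset (Finset (Fin 7)) :=
  {{0,1,5}, {0,2,4}, {0,3,6}, {1,2,3}, {1,4,6}, {2,5,6}}

/-- All 3-element subsets of `Fin 7` that are not non-Fano lines. -/
def nfGoodTriples : Finset (Finset (Fin 7)) :=
  {{0,1,2}, {0,1,3}, {0,1,4}, {0,1,6}, {0,2,3}, {0,2,5}, {0,2,6}, {0,3,4}, {0,3,5}, {0,4,5},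
   {0,4,6}, {0,5,6}, {1,2,4}, {1,2,5}, {1,2,6}, {1,3,4}, {1,3,5}, {1,3,6}, {1,4,5}, {1,5,6},
   {2,3,4}, {2,3,5}, {2,3,6}, {2,4,5}, {2,4,6}, {3,4,5}, {3,4,6}, {3,5,6}, {4,5,6}}

set_option maxRecDepth 40000 in
lemma nf_cover : ∀ s : Finset (Fin 7), s.card ≤ 3 → s ∉ nfLineFinsets →
    ∃ t ∈ nfGoodTriples, s ⊆ t := by decide

lemma nf_coe_mem_lines_iff (s : Finset (Fin 7)) :
    (↑s : Set (Fin 7)) ∈ nonFanoLines ↔ s ∈ nfLineFinsets := by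
  rw [show nonFanoLines =
      {(↑({0,1,5} : Finset (Fin 7)) : Set (Fin 7)), ↑({0,2,4} : Finset (Fin 7)),
       ↑({0,3,6} : Finset (Fin 7)), ↑({1,2,3} : Finset (Fin 7)),
       ↑({1,4,6} : Finset (Fin 7)), ↑({2,5,6} : Finset (Fin 7))} from by
    simp [nonFanoLines]]
  simp only [nfLineFinsets, Set.mem_insert_iff, Set.mem_singleton_iff, Finset.mem_insert,
    Finset.mem_singleton, Finset.coe_inj]

lemma nf_card_le_of_li (φ : Fin 7 → Fin 3 → K) (s : Finset (Fin 7))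
    (h : LinearIndependent K (fun i : (↑s : Set (Fin 7)) => φ i)) : s.card ≤ 3 := by
  have := h.fintype_card_le_finrank
  rw [Module.finrank_pi, Fintype.card_fin] at this
  simpa using this

lemma nf_goodTriples_li (hchar : ringChar K ≠ 2) :
    ∀ t ∈ nfGoodTriples,
      LinearIndependent K (fun i : (↑t : Set (Fin 7)) => nfStdVecs (K := K) i) := by
  have h2 := nf_two_ne_zero hchar
  intro t ht
  simp only [nfGoodTriples, Finset.mem_insert, Finset.mem_singleton] at ht
  rcases ht with rfl|rfl|rfl|rfl|rfl|rfl|rfl|rfl|rfl|rfl|rfl|rfl|rfl|rfl|rfl|rfl|rfl|rfl|rfl|rfl|rfl|rfl|rfl|rfl|rfl|rfl|rfl|rfl|rfl <;>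
  · rw [show ((↑(_ : Finset (Fin 7)) : Set (Fin 7))) = _ from Finset.coe_insert _ _,
      Finset.coe_insert, Finset.coe_singleton,
      nf_li_triple _ (by decide) (by decide) (by decide), nf_li_iff_det3]
    norm_num [nfstd0, nfstd1, nfstd2, nfstd3, nfstd4, nfstd5, nfstd6, nfDet3_lit]
    try exact h2

lemma nf_lines_not_li :
    ∀ s ∈ nfLineFinsets,
      ¬ LinearIndependent K (fun i : (↑s : Set (Fin 7)) => nfStdVecs (K := K) i) := by
  intro s hs
  simp only [nfLineFinsets, Finset.mem_insert, Finset.mem_singleton] at hs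
  rcases hs with rfl|rfl|rfl|rfl|rfl|rfl <;>
  · rw [show ((↑(_ : Finset (Fin 7)) : Set (Fin 7))) = _ from Finset.coe_insert _ _,
      Finset.coe_insert, Finset.coe_singleton,
      nf_li_triple _ (by decide) (by decide) (by decide), nf_li_iff_det3]
    norm_num [nfstd0, nfstd1, nfstd2, nfstd3, nfstd4, nfstd5, nfstd6, nfDet3_lit]

lemma nf_encard_triple_le (a b c : Fin 7) : ({a,b,c} : Set (Fin 7)).encard ≤ 3 := by
  calc ({a,b,c} : Set (Fin 7)).encard ≤ ({b,c} : Set (Fin 7)).encard + 1 :=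
        Set.encard_insert_le _ _
    _ ≤ (({c} : Set (Fin 7)).encard + 1) + 1 := by
        gcongr; exact Set.encard_insert_le _ _
    _ = 3 := by rw [Set.encard_singleton]; rfl

end Aux

/-- The non-Fano matroid is realizable over a field `K` iff `char K ≠ 2`. -/
theorem nonFano_realizable_iff_char_ne_two (K : Type) [Field K]
    (M : Matroid (Fin 7)) (hM : IsNonFanoMatroid M) :
    RealizableRank3 K M ↔ ringChar K ≠ 2 := by
  constructor
  · rintro ⟨φ, hφ⟩ h2eq
    have h2 : (2 : K) = 0 := nf_two_eq_zero h2eq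
    -- dependent (line) determinants vanish
    have hline : ∀ a b c : Fin 7, a ≠ b → a ≠ c → b ≠ c →
        ({a,b,c} : Set (Fin 7)) ∈ nonFanoLines → nfDet3 (φ a) (φ b) (φ c) = 0 := by
      intro a b c hab hac hbc hin
      have hni : ¬ M.Indep {a,b,c} := fun h => ((hM.2 _).mp h).2 hin
      by_contra hd
      exact hni ((hφ _).mpr ((nf_li_triple φ hab hac hbc).mpr ((nf_li_iff_det3 _ _ _).mpr hd)))
    have hgood : ∀ a b c : Fin 7, a ≠ b → a ≠ c → b ≠ c →
        ({a,b,c} : Set (Fin 7)) ∉ nonFanoLines → nfDet3 (φ a) (φ b) (φ c) ≠ 0 := by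
      intro a b c hab hac hbc hnot
      have hind : M.Indep {a,b,c} := (hM.2 _).mpr ⟨nf_encard_triple_le a b c, hnot⟩
      exact (nf_li_iff_det3 _ _ _).mp ((nf_li_triple φ hab hac hbc).mp ((hφ _).mp hind))
    have memL : ∀ a b c : Fin 7, ({a,b,c} : Finset (Fin 7)) ∈ nfLineFinsets →
        ({a,b,c} : Set (Fin 7)) ∈ nonFanoLines := by
      intro a b c h
      have : ((↑({a,b,c} : Finset (Fin 7)) : Set (Fin 7))) ∈ nonFanoLines :=
        (nf_coe_mem_lines_iff _).mpr h
      simpa using this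
    have memG : ∀ a b c : Fin 7, ({a,b,c} : Finset (Fin 7)) ∉ nfLineFinsets →
        ({a,b,c} : Set (Fin 7)) ∉ nonFanoLines := by
      intro a b c h hmem
      exact h ((nf_coe_mem_lines_iff _).mp (by simpa using hmem))
    exact nf_char_two_contradiction (φ 0) (φ 1) (φ 2) (φ 3) (φ 4) (φ 5) (φ 6)
      (hline 3 1 2 (by decide) (by decide) (by decide) (memL 3 1 2 (by decide)))
      (hline 0 4 2 (by decide) (by decide) (by decide) (memL 0 4 2 (by decide)))
      (hline 0 1 5 (by decide) (by decide) (by decide) (memL 0 1 5 (by decide)))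
      (hline 0 3 6 (by decide) (by decide) (by decide) (memL 0 3 6 (by decide)))
      (hline 1 4 6 (by decide) (by decide) (by decide) (memL 1 4 6 (by decide)))
      (hline 2 5 6 (by decide) (by decide) (by decide) (memL 2 5 6 (by decide)))
      (hgood 0 1 2 (by decide) (by decide) (by decide) (memG 0 1 2 (by decide)))
      (hgood 6 1 2 (by decide) (by decide) (by decide) (memG 6 1 2 (by decide)))
      (hgood 0 6 2 (by decide) (by decide) (by decide) (memG 0 6 2 (by decide)))
      (hgood 0 1 6 (by decide) (by decide) (by decide) (memG 0 1 6 (by decide)))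
      (hgood 3 4 5 (by decide) (by decide) (by decide) (memG 3 4 5 (by decide)))
      h2
  · intro hchar
    refine ⟨nfStdVecs, fun I => ?_⟩
    rw [hM.2 I]
    have hfin : I.Finite := Set.toFinite I
    have hcoe : (↑hfin.toFinset : Set (Fin 7)) = I := hfin.coe_toFinset
    set s := hfin.toFinset with hs
    constructor
    · rintro ⟨hcard, hnot⟩
      have hsc : s.card ≤ 3 := by
        rw [← hcoe, Set.encard_coe_eq_coe_finsetCard] at hcard
        exact_mod_cast hcard
      have hsl : s ∉ nfLineFinsets := fun h =>
        hnot (by rw [← hcoe]; exact (nf_coe_mem_lines_iff s).mpr h)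
      obtain ⟨t, htg, hst⟩ := nf_cover s hsc hsl
      have hli := nf_goodTriples_li hchar t htg
      have := nf_li_mono (φ := nfStdVecs) (Finset.coe_subset.mpr hst) hli
      rwa [hcoe] at this
    · intro h
      have h' : LinearIndependent K (fun i : (↑s : Set (Fin 7)) => nfStdVecs (K := K) i) := by
        rw [hcoe]; exact h
      refine ⟨?_, ?_⟩
      · rw [← hcoe, Set.encard_coe_eq_coe_finsetCard]
        exact_mod_cast nf_card_le_of_li nfStdVecs s h'
      · intro hmem
        have hsl : s ∈ nfLineFinsets := (nf_coe_mem_lines_iff s).mp (hcoe ▸ hmem)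
        exact nf_lines_not_li s hsl h'
end

section
/- The matroid M is realizable over the rationals: the column matroid of the 3×13 rational matrix A with rows (1,4,4,8,4,2,1,0,0,4,4,4,4), (1,-2,1,-1,1,-1,0,1,0,-5,-5,5,5), (1,5,-10,10,4,-1,0,0,1,6,-6,-6,6) equals M. -/
def mLines : Set (Set (Fin 13)) :=
  {{0,3,9}, {0,4,7}, {0,5,6}, {8,9,10}, {7,10,11},
   {1,4,9}, {1,3,7}, {1,5,8}, {6,9,11}, {6,10,12},
   {2,5,9}, {2,3,6}, {2,4,8}, {7,9,12}, {8,11,12}}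

/-- The `3 × 13` rational matrix `A` realizing `M`. -/
def A : Matrix (Fin 3) (Fin 13) ℚ :=
  !![1,  4,   4,  8, 4,  2, 1, 0, 0,  4,  4,  4, 4;
     1, -2,   1, -1, 1, -1, 0, 1, 0, -5, -5,  5, 5;
     1,  5, -10, 10, 4, -1, 0, 0, 1,  6, -6, -6, 6]

/-- Integer version of `A`. -/
def B : Fin 3 → Fin 13 → ℤ :=
  ![![1,  4,   4,  8, 4,  2, 1, 0, 0,  4,  4,  4, 4],
    ![1, -2,   1, -1, 1, -1, 0, 1, 0, -5, -5,  5, 5],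
    ![1,  5, -10, 10, 4, -1, 0, 0, 1,  6, -6, -6, 6]]

/-- Integer 3×3 determinant of columns i j k. -/
def dZ (i j k : Fin 13) : ℤ :=
  B 0 i * B 1 j * B 2 k - B 0 i * B 2 j * B 1 k - B 1 i * B 0 j * B 2 k +
    B 1 i * B 2 j * B 0 k + B 2 i * B 0 j * B 1 k - B 2 i * B 1 j * B 0 k

def v : Fin 13 → Fin 3 → ℚ := fun i r => A r i

lemma hAB : ∀ (r : Fin 3) (i : Fin 13), A r i = (B r i : ℚ) := by
  intro r i; fin_cases r <;> fin_cases i <;> norm_num [A, B]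

lemma L3 (i j k : Fin 13) :
    LinearIndependent ℚ (v ∘ ![i, j, k]) ↔ dZ i j k ≠ 0 := by
  have h1 : LinearIndependent ℚ (v ∘ ![i, j, k]) ↔
      IsUnit (Matrix.of fun c r => A r (![i, j, k] c)) :=
    Matrix.linearIndependent_rows_iff_isUnit
  have h2 : (Matrix.of fun c r => A r (![i, j, k] c)).det = ((dZ i j k : ℚ)) := by
    rw [Matrix.det_fin_three]
    show A 0 i * A 1 j * A 2 k - A 0 i * A 2 j * A 1 k - A 1 i * A 0 j * A 2 k +
      A 1 i * A 2 j * A 0 k + A 2 i * A 0 j * A 1 k - A 2 i * A 1 j * A 0 k = _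
    simp only [hAB, dZ]; push_cast; ring
  rw [h1, Matrix.isUnit_iff_isUnit_det, h2, isUnit_iff_ne_zero]
  exact Int.cast_ne_zero

lemma indep_mono {I J : Set (Fin 13)} (hIJ : I ⊆ J)
    (h : LinearIndependent ℚ (fun x : J => v x)) :
    LinearIndependent ℚ (fun x : I => v x) :=
  h.comp (Set.inclusion hIJ) (Set.inclusion_injective hIJ)

lemma indep_range (g : Fin 3 → Fin 13) (hg : Function.Injective g) :
    LinearIndependent ℚ (fun x : (Set.range g) => v x) ↔ LinearIndependent ℚ (v ∘ g) :=
  (linearIndependent_equiv (Equiv.ofInjective g hg)).symm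

def lineList : List (Finset (Fin 13)) :=
  [{0,3,9}, {0,4,7}, {0,5,6}, {8,9,10}, {7,10,11},
   {1,4,9}, {1,3,7}, {1,5,8}, {6,9,11}, {6,10,12},
   {2,5,9}, {2,3,6}, {2,4,8}, {7,9,12}, {8,11,12}]

set_option maxRecDepth 100000 in
lemma D3 : ∀ i j k : Fin 13, i ≠ j → i ≠ k → j ≠ k → dZ i j k = 0 →
    ({i,j,k} : Finset (Fin 13)) ∈ lineList := by decide

set_option maxRecDepth 100000 in
lemma Dpair : ∀ i j : Fin 13, i ≠ j → ∃ k, dZ i j k ≠ 0 := by decide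

set_option maxRecDepth 100000 in
lemma Dsingle : ∀ i : Fin 13, ∃ j k, dZ i j k ≠ 0 := by decide

lemma lineCoe : ∀ s ∈ lineList, (↑s : Set (Fin 13)) ∈ mLines := by
  intro s hs
  simp only [lineList, List.mem_cons, List.not_mem_nil, or_false] at hs
  rcases hs with rfl|rfl|rfl|rfl|rfl|rfl|rfl|rfl|rfl|rfl|rfl|rfl|rfl|rfl|rfl <;>
    simp [mLines]

lemma not_indep_line (a b c : Fin 13) (hinj : Function.Injective ![a, b, c])
    (hd : dZ a b c = 0) :
    ¬ LinearIndependent ℚ (fun x : ({a, b, c} : Set (Fin 13)) => v x) := by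
  intro h
  have hr : ({a, b, c} : Set (Fin 13)) = Set.range ![a, b, c] := by
    ext x; simp [Matrix.range_cons, Matrix.range_empty]; tauto
  rw [hr] at h
  exact (L3 a b c).mp ((indep_range ![a, b, c] hinj).mp h) hd

lemma range_sub (a b c : Fin 13) : ({a, b, c} : Set (Fin 13)) ⊆ Set.range ![a, b, c] := by
  intro x hx
  rcases hx with rfl | rfl | rfl
  · exact ⟨0, rfl⟩
  · exact ⟨1, rfl⟩
  · exact ⟨2, rfl⟩

/-- The column matroid of `A` is exactly `M`: a set of columns of `A` is linearly
independent over `ℚ` iff it has at most 3 elements and is not one of the lines of `M`. -/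
theorem M_realizable_over_Q :
    ∀ I : Set (Fin 13),
      LinearIndependent ℚ (fun i : I => fun r => A r i) ↔
        I.encard ≤ 3 ∧ I ∉ mLines := by
  intro I
  constructor
  · intro h
    constructor
    · haveI : Fintype I := I.toFinite.fintype
      have hc : Fintype.card I ≤ Module.finrank ℚ (Fin 3 → ℚ) :=
        h.fintype_card_le_finrank
      rw [Module.finrank_fin_fun] at hc
      rw [I.encard_eq_coe_toFinset_card, Set.toFinset_card]
      exact_mod_cast hc
    · intro hI
      simp only [mLines, Set.mem_insert_iff, Set.mem_singleton_iff] at hI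
      rcases hI with rfl|rfl|rfl|rfl|rfl|rfl|rfl|rfl|rfl|rfl|rfl|rfl|rfl|rfl|rfl
      · exact not_indep_line 0 3 9 (by decide) (by decide) h
      · exact not_indep_line 0 4 7 (by decide) (by decide) h
      · exact not_indep_line 0 5 6 (by decide) (by decide) h
      · exact not_indep_line 8 9 10 (by decide) (by decide) h
      · exact not_indep_line 7 10 11 (by decide) (by decide) h
      · exact not_indep_line 1 4 9 (by decide) (by decide) h
      · exact not_indep_line 1 3 7 (by decide) (by decide) h
      · exact not_indep_line 1 5 8 (by decide) (by decide) h
      · exact not_indep_line 6 9 11 (by decide) (by decide) h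
      · exact not_indep_line 6 10 12 (by decide) (by decide) h
      · exact not_indep_line 2 5 9 (by decide) (by decide) h
      · exact not_indep_line 2 3 6 (by decide) (by decide) h
      · exact not_indep_line 2 4 8 (by decide) (by decide) h
      · exact not_indep_line 7 9 12 (by decide) (by decide) h
      · exact not_indep_line 8 11 12 (by decide) (by decide) h
  · rintro ⟨hcard, hline⟩
    obtain ⟨hfin, n, hn, hn3⟩ := Set.encard_le_coe_iff.mp (by exact_mod_cast hcard)
    interval_cases n
    · obtain rfl : I = ∅ := Set.encard_eq_zero.mp (by exact_mod_cast hn)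
      haveI : IsEmpty (↥(∅ : Set (Fin 13))) := Set.isEmpty_coe_sort.2 rfl
      exact linearIndependent_empty_type
    · obtain ⟨a, rfl⟩ := Set.encard_eq_one.mp (by exact_mod_cast hn)
      obtain ⟨j, k, hd⟩ := Dsingle a
      have hli := (indep_range ![a, j, k] (((L3 a j k).mpr hd).injective.of_comp)).mpr
        ((L3 a j k).mpr hd)
      refine indep_mono ?_ hli
      intro x hx
      rw [Set.mem_singleton_iff] at hx
      subst hx
      exact ⟨0, rfl⟩
    · obtain ⟨a, b, hab, rfl⟩ := Set.encard_eq_two.mp (by exact_mod_cast hn)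
      obtain ⟨k, hd⟩ := Dpair a b hab
      have hli := (indep_range ![a, b, k] (((L3 a b k).mpr hd).injective.of_comp)).mpr
        ((L3 a b k).mpr hd)
      refine indep_mono ?_ hli
      intro x hx
      rcases hx with rfl | rfl
      · exact ⟨0, rfl⟩
      · exact ⟨1, rfl⟩
    · obtain ⟨a, b, c, hab, hac, hbc, rfl⟩ := Set.encard_eq_three.mp (by exact_mod_cast hn)
      have hd : dZ a b c ≠ 0 := by
        intro h0
        exact hline (by simpa using lineCoe _ (D3 a b c hab hac hbc h0))
      have hli := (indep_range ![a, b, c] (((L3 a b c).mpr hd).injective.of_comp)).mpr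
        ((L3 a b c).mpr hd)
      exact indep_mono (range_sub a b c) hli
end

section
/- The rank-4 matroid N is not realizable over any field. -/
def bigBlocks : Set (Set (Fin 13)) :=
  {{0,1,3,4,7,9,12}, {0,2,3,5,6,9,11}, {1,2,4,5,8,9,10}, {6,7,8,9,10,11,12},
   {0,3,8,9,10}, {1,4,6,9,11}, {2,5,7,9,12},
   {0,4,5,6,7}, {1,2,3,6,7}, {0,1,5,6,8}, {2,3,4,6,8}, {0,2,4,7,8}, {1,3,5,7,8},
   {0,4,7,10,11}, {1,3,7,10,11}, {0,5,6,10,12}, {2,3,6,10,12}, {1,5,8,11,12},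
   {2,4,8,11,12}, {0,8,11,12}, {1,6,10,12}, {2,7,10,11}, {3,8,11,12},
   {4,6,10,12}, {5,7,10,11}}

/-- The rank-4 matroid `N` characterized by its independent sets. -/
def IsN (N : Matroid (Fin 13)) : Prop :=
  N.E = Set.univ ∧ ∀ I : Set (Fin 13),
    N.Indep I ↔ I.encard ≤ 4 ∧ (∀ L ∈ mLines, ¬ L ⊆ I) ∧
      ¬ ∃ Z ∈ bigBlocks, I ⊆ Z ∧ I.encard = 4

/-- Realizability over `K`: being the column matroid of a matrix over `K`. -/
def Realizable (K : Type) [Field K] (M : Matroid (Fin 13)) : Prop :=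
  ∃ (r : ℕ) (φ : Fin 13 → (Fin r → K)),
    ∀ I ⊆ M.E, (M.Indep I ↔ LinearIndependent K (fun i : I => φ i))

section Aux
variable {K : Type} [Field K] {V : Type*} [AddCommGroup V] [Module K V]

theorem li_range_iff {n m : ℕ} (φ : Fin m → V) (f : Fin n → Fin m) (hf : Function.Injective f) :
    LinearIndependent K (fun i : (Set.range f) => φ i) ↔ LinearIndependent K (φ ∘ f) := by
  rw [← linearIndependent_equiv (Equiv.ofInjective f hf) (f := fun i : (Set.range f) => φ i)]
  rfl

theorem pair_not {x y : V} (h : LinearIndependent K ![x,y]) (c : K) : x ≠ c • y := by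
  intro hc
  rw [LinearIndependent.pair_iff] at h
  have := (h 1 (-c) (by rw [hc]; module)).1
  simp at this

theorem triple_comb {u v w : V} (h2 : LinearIndependent K ![v, w])
    (h3 : ¬ LinearIndependent K ![u, v, w]) : ∃ s t : K, u = s • v + t • w := by
  have h3' : ¬ LinearIndependent K (Fin.cons u ![v, w] : Fin 3 → V) := h3
  rw [linearIndependent_fin_cons] at h3'
  push_neg at h3'
  have h4 := h3' h2
  have hr : Set.range ![v, w] = {v, w} := by
    ext x; simp [Matrix.range_cons, Matrix.range_empty]; tauto
  rw [hr] at h4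
  obtain ⟨s, t, hst⟩ := Submodule.mem_span_pair.mp h4
  exact ⟨s, t, hst.symm⟩

theorem quad_unique {E0 E1 E2 E3 : V} (hE : LinearIndependent K ![E0, E1, E2, E3])
    (p q r s p' q' r' s' : K)
    (h : p • E0 + q • E1 + r • E2 + s • E3 = p' • E0 + q' • E1 + r' • E2 + s' • E3) :
    p = p' ∧ q = q' ∧ r = r' ∧ s = s' := by
  rw [Fintype.linearIndependent_iff] at hE
  have h0 := hE ![p - p', q - q', r - r', s - s'] (by
    simp only [Fin.sum_univ_four, Matrix.cons_val_zero, Matrix.cons_val_one, Matrix.head_cons,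
      Matrix.cons_val_two, Matrix.tail_cons, Matrix.cons_val_three]
    linear_combination (norm := module) h)
  have e0 := h0 0; have e1 := h0 1; have e2 := h0 2; have e3 := h0 3
  simp only [Matrix.cons_val_zero, Matrix.cons_val_one, Matrix.head_cons, Matrix.cons_val_two,
    Matrix.tail_cons, Matrix.cons_val_three] at e0 e1 e2 e3
  exact ⟨sub_eq_zero.mp e0, sub_eq_zero.mp e1, sub_eq_zero.mp e2, sub_eq_zero.mp e3⟩
end Aux

set_option maxHeartbeats 4000000 in
/-- The rank-4 matroid `N` is not realizable over any field. -/
theorem N_not_realizable (N : Matroid (Fin 13)) (hN : IsN N)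
    (K : Type) [Field K] : ¬ Realizable K N := by
  rintro ⟨r, φ, hφ⟩
  obtain ⟨hE, hI⟩ := hN
  have hch : ∀ I : Set (Fin 13), N.Indep I ↔ LinearIndependent K (fun i : I => φ i) :=
    fun I => hφ I (by rw [hE]; exact Set.subset_univ I)
  have mL3 : ∀ L ∈ mLines, L.encard = 3 := by
    intro L hL
    simp only [mLines, Set.mem_insert_iff, Set.mem_singleton_iff] at hL
    rcases hL with rfl|rfl|rfl|rfl|rfl|rfl|rfl|rfl|rfl|rfl|rfl|rfl|rfl|rfl|rfl <;>
      · rw [Set.encard_insert_of_notMem (by decide), Set.encard_pair (by decide)]; decide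
  have pairLI : ∀ a b : Fin 13, a ≠ b → LinearIndependent K ![φ a, φ b] := by
    intro a b hab
    have hi : N.Indep {a, b} := by
      rw [hI]
      refine ⟨?_, ?_, ?_⟩
      · rw [Set.encard_pair hab]; decide
      · intro L hL hsub
        have h3 := mL3 L hL
        have hmono := Set.encard_mono hsub
        rw [h3, Set.encard_pair hab] at hmono
        exact absurd hmono (by decide)
      · rintro ⟨Z, hZ, hsub, h4⟩
        rw [Set.encard_pair hab] at h4
        exact absurd h4 (by decide)
    have h2 := (hch _).1 hi
    have hre : ({a, b} : Set (Fin 13)) = Set.range ![a, b] := by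
      ext x; simp [Matrix.range_cons, Matrix.range_empty]; tauto
    have hinj : Function.Injective ![a, b] := by
      intro i j hij
      fin_cases i <;> fin_cases j <;> simp_all
    rw [hre, li_range_iff φ _ hinj] at h2
    have hcomp : (φ ∘ ![a, b]) = ![φ a, φ b] := by funext i; fin_cases i <;> rfl
    rwa [hcomp] at h2
  have trip : ∀ (a b c : Fin 13) (S : Set (Fin 13)), S ∈ mLines → S = {a, b, c} →
      b ≠ c → Function.Injective ![a, b, c] → ∃ s t : K, φ a = s • φ b + t • φ c := by
    intro a b c S hm hS hbc hinj
    have hdep : ¬ N.Indep S := fun hind => ((hI S).1 hind).2.1 S hm (subset_refl S)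
    have h1 : ¬ LinearIndependent K ![φ a, φ b, φ c] := by
      intro hli
      apply hdep
      apply (hch S).2
      have hre : S = Set.range ![a, b, c] := by
        rw [hS]; ext x; simp [Matrix.range_cons, Matrix.range_empty]; tauto
      rw [hre]
      refine (li_range_iff φ _ hinj).2 ?_
      have hcomp : (φ ∘ ![a, b, c]) = ![φ a, φ b, φ c] := by funext i; fin_cases i <;> rfl
      rw [hcomp]; exact hli
    exact triple_comb (pairLI b c hbc) h1
  have hB : LinearIndependent K ![φ 0, φ 1, φ 2, φ 9] := by
    have hi : N.Indep {0, 1, 2, 9} := by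
      rw [hI]
      refine ⟨?_, ?_, ?_⟩
      · rw [Set.encard_insert_of_notMem (by decide), Set.encard_insert_of_notMem (by decide),
          Set.encard_pair (by decide)]
        decide
      · intro L hL hsub
        simp only [mLines, Set.mem_insert_iff, Set.mem_singleton_iff] at hL
        rcases hL with rfl|rfl|rfl|rfl|rfl|rfl|rfl|rfl|rfl|rfl|rfl|rfl|rfl|rfl|rfl <;>
          · simp only [Set.insert_subset_iff, Set.singleton_subset_iff, Set.mem_insert_iff,
              Set.mem_singleton_iff] at hsub
            revert hsub; decide
      · rintro ⟨Z, hZ, hsub, -⟩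
        simp only [bigBlocks, Set.mem_insert_iff, Set.mem_singleton_iff] at hZ
        rcases hZ with rfl|rfl|rfl|rfl|rfl|rfl|rfl|rfl|rfl|rfl|rfl|rfl|rfl|rfl|rfl|rfl|rfl|rfl|rfl|rfl|rfl|rfl|rfl|rfl|rfl <;>
          · simp only [Set.insert_subset_iff, Set.singleton_subset_iff, Set.mem_insert_iff,
              Set.mem_singleton_iff] at hsub
            revert hsub; decide
    have h2 := (hch _).1 hi
    have hre : ({0, 1, 2, 9} : Set (Fin 13)) = Set.range ![0, 1, 2, 9] := by
      ext x; simp [Matrix.range_cons, Matrix.range_empty]; tauto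
    rw [hre, li_range_iff φ _ (by decide)] at h2
    have hcomp : (φ ∘ ![0, 1, 2, 9]) = ![φ 0, φ 1, φ 2, φ 9] := by funext i; fin_cases i <;> rfl
    rwa [hcomp] at h2
  obtain ⟨a3, b3, hR3⟩ := trip 3 0 9 {0,3,9} (by simp [mLines]) (by ext x; simp; tauto) (by decide) (by decide)
  obtain ⟨a4, b4, hR4⟩ := trip 4 1 9 {1,4,9} (by simp [mLines]) (by ext x; simp; tauto) (by decide) (by decide)
  obtain ⟨a5, b5, hR5⟩ := trip 5 2 9 {2,5,9} (by simp [mLines]) (by ext x; simp; tauto) (by decide) (by decide)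
  obtain ⟨p6, q6, hR6a⟩ := trip 6 0 5 {0,5,6} (by simp [mLines]) (by ext x; simp; tauto) (by decide) (by decide)
  obtain ⟨P6, Q6, hR6b⟩ := trip 6 2 3 {2,3,6} (by simp [mLines]) (by ext x; simp; tauto) (by decide) (by decide)
  obtain ⟨p7, q7, hR7a⟩ := trip 7 0 4 {0,4,7} (by simp [mLines]) (by ext x; simp; tauto) (by decide) (by decide)
  obtain ⟨P7, Q7, hR7b⟩ := trip 7 1 3 {1,3,7} (by simp [mLines]) (by ext x; simp; tauto) (by decide) (by decide)
  obtain ⟨p8, q8, hR8a⟩ := trip 8 1 5 {1,5,8} (by simp [mLines]) (by ext x; simp; tauto) (by decide) (by decide)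
  obtain ⟨P8, Q8, hR8b⟩ := trip 8 2 4 {2,4,8} (by simp [mLines]) (by ext x; simp; tauto) (by decide) (by decide)
  obtain ⟨g10, h10, hR10⟩ := trip 10 9 8 {8,9,10} (by simp [mLines]) (by ext x; simp; tauto) (by decide) (by decide)
  obtain ⟨g11, h11, hR11⟩ := trip 11 9 6 {6,9,11} (by simp [mLines]) (by ext x; simp; tauto) (by decide) (by decide)
  obtain ⟨g12, h12, hR12⟩ := trip 12 9 7 {7,9,12} (by simp [mLines]) (by ext x; simp; tauto) (by decide) (by decide)
  obtain ⟨x1, y1, hL1⟩ := trip 11 7 10 {7,10,11} (by simp [mLines]) (by ext x; simp; tauto) (by decide) (by decide)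
  obtain ⟨x2, y2, hL2⟩ := trip 12 6 10 {6,10,12} (by simp [mLines]) (by ext x; simp; tauto) (by decide) (by decide)
  obtain ⟨x3, y3, hL3⟩ := trip 12 8 11 {8,11,12} (by simp [mLines]) (by ext x; simp; tauto) (by decide) (by decide)
  -- nonvanishing of coefficients
  have ha3 : a3 ≠ 0 := fun h => pair_not (pairLI 3 9 (by decide)) b3 (by rw [hR3, h]; module)
  have hb3 : b3 ≠ 0 := fun h => pair_not (pairLI 3 0 (by decide)) a3 (by rw [hR3, h]; module)
  have ha4 : a4 ≠ 0 := fun h => pair_not (pairLI 4 9 (by decide)) b4 (by rw [hR4, h]; module)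
  have hb4 : b4 ≠ 0 := fun h => pair_not (pairLI 4 1 (by decide)) a4 (by rw [hR4, h]; module)
  have ha5 : a5 ≠ 0 := fun h => pair_not (pairLI 5 9 (by decide)) b5 (by rw [hR5, h]; module)
  have hb5 : b5 ≠ 0 := fun h => pair_not (pairLI 5 2 (by decide)) a5 (by rw [hR5, h]; module)
  have hQ6 : Q6 ≠ 0 := fun h => pair_not (pairLI 6 2 (by decide)) P6 (by rw [hR6b, h]; module)
  have hQ7 : Q7 ≠ 0 := fun h => pair_not (pairLI 7 1 (by decide)) P7 (by rw [hR7b, h]; module)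
  have hQ8 : Q8 ≠ 0 := fun h => pair_not (pairLI 8 2 (by decide)) P8 (by rw [hR8b, h]; module)
  have hh10 : h10 ≠ 0 := fun h => pair_not (pairLI 10 9 (by decide)) g10 (by rw [hR10, h]; module)
  have hh11 : h11 ≠ 0 := fun h => pair_not (pairLI 11 9 (by decide)) g11 (by rw [hR11, h]; module)
  have hh12 : h12 ≠ 0 := fun h => pair_not (pairLI 12 9 (by decide)) g12 (by rw [hR12, h]; module)
  -- coordinates with respect to the basis (φ 0, φ 1, φ 2, φ 9)
  have hv6 : φ 6 = p6 • φ 0 + (0:K) • φ 1 + (q6*a5) • φ 2 + (q6*b5) • φ 9 := by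
    rw [hR6a, hR5]; module
  have hv6' : φ 6 = (Q6*a3) • φ 0 + (0:K) • φ 1 + P6 • φ 2 + (Q6*b3) • φ 9 := by
    rw [hR6b, hR3]; module
  obtain ⟨h6a, -, -, h6d⟩ := quad_unique hB _ _ _ _ _ _ _ _ (hv6.symm.trans hv6')
  have hv7 : φ 7 = p7 • φ 0 + (q7*a4) • φ 1 + (0:K) • φ 2 + (q7*b4) • φ 9 := by
    rw [hR7a, hR4]; module
  have hv7' : φ 7 = (Q7*a3) • φ 0 + P7 • φ 1 + (0:K) • φ 2 + (Q7*b3) • φ 9 := by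
    rw [hR7b, hR3]; module
  obtain ⟨h7a, -, -, h7d⟩ := quad_unique hB _ _ _ _ _ _ _ _ (hv7.symm.trans hv7')
  have hv8 : φ 8 = (0:K) • φ 0 + p8 • φ 1 + (q8*a5) • φ 2 + (q8*b5) • φ 9 := by
    rw [hR8a, hR5]; module
  have hv8' : φ 8 = (0:K) • φ 0 + (Q8*a4) • φ 1 + P8 • φ 2 + (Q8*b4) • φ 9 := by
    rw [hR8b, hR4]; module
  obtain ⟨-, h8a, -, h8d⟩ := quad_unique hB _ _ _ _ _ _ _ _ (hv8.symm.trans hv8')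
  have hv11 : φ 11 = (h11*p6) • φ 0 + (0:K) • φ 1 + (h11*(q6*a5)) • φ 2
      + (h11*(q6*b5)+g11) • φ 9 := by
    rw [hR11, hR6a, hR5]; module
  have hv11x : φ 11 = (x1*p7) • φ 0 + (x1*(q7*a4) + y1*(h10*p8)) • φ 1
      + (y1*(h10*(q8*a5))) • φ 2 + (x1*(q7*b4) + y1*(h10*(q8*b5)+g10)) • φ 9 := by
    rw [hL1, hR7a, hR4, hR10, hR8a, hR5]; module
  obtain ⟨A0, A1, A2, A3⟩ := quad_unique hB _ _ _ _ _ _ _ _ (hv11.symm.trans hv11x)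
  have hv12 : φ 12 = (h12*p7) • φ 0 + (h12*(q7*a4)) • φ 1 + (0:K) • φ 2
      + (h12*(q7*b4)+g12) • φ 9 := by
    rw [hR12, hR7a, hR4]; module
  have hv12x2 : φ 12 = (x2*p6) • φ 0 + (y2*(h10*p8)) • φ 1
      + (x2*(q6*a5) + y2*(h10*(q8*a5))) • φ 2
      + (x2*(q6*b5) + y2*(h10*(q8*b5)+g10)) • φ 9 := by
    rw [hL2, hR6a, hR10, hR8a, hR5]; module
  obtain ⟨B0, B1, B2, B3⟩ := quad_unique hB _ _ _ _ _ _ _ _ (hv12.symm.trans hv12x2)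
  have hv12x3 : φ 12 = (y3*(h11*p6)) • φ 0 + (x3*p8) • φ 1
      + (x3*(q8*a5) + y3*(h11*(q6*a5))) • φ 2
      + (x3*(q8*b5) + y3*(h11*(q6*b5)+g11)) • φ 9 := by
    rw [hL3, hR8a, hR11, hR6a, hR5]; module
  obtain ⟨C0, C1, C2, C3⟩ := quad_unique hB _ _ _ _ _ _ _ _ (hv12.symm.trans hv12x3)
  -- scalar algebra
  have S1 : h11*Q6 = x1*Q7 := mul_right_cancel₀ ha3 (by linear_combination A0 - h11*h6a + x1*h7a)
  have S2 : h11*q6 = y1*(h10*q8) := mul_right_cancel₀ ha5 (by linear_combination A2)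
  have S3 : x1*q7 + y1*(h10*Q8) = 0 := mul_right_cancel₀ ha4 (by linear_combination -A1 - y1*h10*h8a)
  have S2' : h11*(Q6*b3) = y1*(h10*(Q8*b4)) := by
    linear_combination b5*S2 - h11*h6d + y1*h10*h8d
  have S3' : x1*(Q7*b3) + y1*(h10*(Q8*b4)) = 0 := by
    linear_combination b4*S3 - x1*h7d
  have h2eq : (2:K)*(h11*(Q6*b3)) = 0 := by linear_combination S3' + b3*S1 + S2'
  have hK2 : (2:K) = 0 := by
    rcases mul_eq_zero.mp h2eq with h | h
    · exact h
    · exact absurd h (mul_ne_zero hh11 (mul_ne_zero hQ6 hb3))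
  have T2 : h12*q7 = y2*(h10*Q8) := mul_right_cancel₀ ha4 (by linear_combination B1 + y2*h10*h8a)
  have T3 : x2*q6 + y2*(h10*q8) = 0 := mul_right_cancel₀ ha5 (by linear_combination -B2)
  have U1 : h12*Q7 = y3*(h11*Q6) := mul_right_cancel₀ ha3 (by linear_combination C0 - h12*h7a + y3*h11*h6a)
  have U2 : h12*q7 = x3*Q8 := mul_right_cancel₀ ha4 (by linear_combination C1 + x3*h8a)
  have W2 : x2*(Q6*b3) + y2*(h10*(Q8*b4)) = 0 := by
    linear_combination b5*T3 - x2*h6d - y2*h10*h8d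
  have W2' : h12*(Q7*b3) = y2*(h10*(Q8*b4)) := by linear_combination b4*T2 - h12*h7d
  have W3 : h12*(Q7*b3) = x3*(Q8*b4) := by linear_combination b4*U2 - h12*h7d
  have V1 : h12*(Q7*b3) = y3*(h11*(Q6*b3)) := by linear_combination b3*U1
  have P1 : g11 = y1*(h10*(q8*b5)+g10) := by
    linear_combination A3 - h11*h6d + x1*h7d - b3*S1
  have B3'' : h12*(Q7*b3) + g12 = x2*(Q6*b3) + y2*(h10*(q8*b5)+g10) := by
    linear_combination B3 - h12*h7d + x2*h6d
  have P2 : g12 = y2*(h10*(q8*b5)+g10) := by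
    linear_combination B3'' + W2 + W2' - (h12*(Q7*b3))*hK2
  have C3'' : h12*(Q7*b3) + g12 = x3*(Q8*b4) + y3*(h11*(Q6*b3)) + y3*g11 := by
    linear_combination C3 - h12*h7d + x3*h8d + y3*h11*h6d
  have P3 : g12 = h12*(Q7*b3) + y3*g11 := by linear_combination C3'' - W3 - V1
  have Yeq : (y3*y1)*(h10*(Q8*b4)) = y2*(h10*(Q8*b4)) := by
    linear_combination -(y3*S2') - b3*U1 + W2'
  have hGnz : h10*(Q8*b4) ≠ 0 := mul_ne_zero hh10 (mul_ne_zero hQ8 hb4)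
  have Y : y3*y1 = y2 := mul_right_cancel₀ hGnz Yeq
  have Fin0 : h12*(Q7*b3) = 0 := by
    linear_combination -P3 + P2 - y3*P1 - (h10*(q8*b5)+g10)*Y
  exact absurd Fin0 (mul_ne_zero hh12 (mul_ne_zero hQ7 hb3))
end
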